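/- arXiv:1007.1836 — 2 statements merged into one kernel-verified Lean document; each statement's English description precedes it below -/
import Mathlib

section
/- Let P_1,...,P_n be real univariate polynomials with deg P_i = d_i > 0, and let 0 ≤ k < min{d_1,...,d_n}. Then the generalized subresultant matrix N_k(P_1,...,P_n) has full column rank if and only if deg(gcd(P_1,...,P_n)) ≤ k. -/
open Polynomial Finset

/-- Entry formula for the convolution (Toeplitz) matrix of a polynomial `P`
regarded as having degree `m`: column `c` carries the coefficient vector of `P`
(in degree-descending order) shifted down by `c`. -/
noncomputable def convEntry (P : ℝ[X]) (m r c : ℕ) : ℝ :=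
  if c ≤ r ∧ r ≤ c + m then P.coeff (m + c - r) else 0

/-- The convolution matrix `C_j(P)` of a polynomial `P` of degree `m`:
it has `m + j + 1` rows and `j + 1` columns, and `C_j(P) · h` is the
coefficient vector (degree-descending) of `H · P` when `h` is the
coefficient vector of a polynomial `H` of degree at most `j`. -/
noncomputable def convMat (P : ℝ[X]) (m j : ℕ) : Matrix (Fin (m + j + 1)) (Fin (j + 1)) ℝ :=
  fun r c => convEntry P m r c

/-- The `k`-th generalized subresultant matrix `N_k(P_1, ..., P_n)` (Rupprecht's
formulation): for `i = 2, ..., n`, the `i`-th block row is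
`( C_{d_1-1-k}(P_i), 0, ..., 0, C_{d_i-1-k}(P_1), 0, ..., 0 )` with
`C_{d_i-1-k}(P_1)` in the `i`-th block column.  The block row for `i = 0` is empty. -/
noncomputable def genSubres {n : ℕ} [NeZero n] (P : Fin n → ℝ[X]) (d : Fin n → ℕ) (k : ℕ) :
    Matrix ((i : Fin n) × Fin (if i = 0 then 0 else d 0 + d i - k))
           ((j : Fin n) × Fin (d j - k)) ℝ :=
  fun r c =>
    if c.1 = 0 then convEntry (P r.1) (d r.1) r.2 c.2
    else if c.1 = r.1 then convEntry (P 0) (d 0) r.2 c.2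
    else 0

/-- The squared 2-norm of the coefficient vector of a polynomial. -/
noncomputable def polyNormSq (Q : ℝ[X]) : ℝ :=
  ∑ j ∈ Finset.range (Q.natDegree + 1), (Q.coeff j) ^ 2


/-!
Read a vector `v` on the columns of `N_k` block-wise as the descending coefficient vectors of
polynomials `H j` with `deg H j < d j - k`. Since a convolution matrix multiplies by its
polynomial, block row `i` of `N_k v = 0` says exactly `H 0 * P i + H i * P 0 = 0`, so `N_k` has
full column rank iff this syzygy system has only the trivial solution. If `G = gcd P` has degree
`> k`, then `(P 0 / G, -P 1 / G, …, -P (n-1) / G)` is a nontrivial solution. Conversely, `P 0`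
divides `H 0 * P i` for every `i`, hence divides `H 0 * G`; when `deg G ≤ k` this is impossible
for `H 0 ≠ 0` by degrees, and `H 0 = 0` forces every `H i = 0`.
-/

section DescCoeffs

variable {R : Type*} [Semiring R]

noncomputable def polyOfDescCoeffs {m : ℕ} (v : Fin m → R) : R[X] :=
  ∑ t, C (v t) * X ^ (m - 1 - t)

theorem coeff_polyOfDescCoeffs {m : ℕ} (v : Fin m → R) (q : ℕ) :
    (polyOfDescCoeffs v).coeff q = if h : q < m then v ⟨m - 1 - q, by omega⟩ else 0 := by
  simp only [polyOfDescCoeffs, finsetSum_coeff, coeff_C_mul_X_pow]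
  split_ifs with hq
  · rw [Fintype.sum_eq_single ⟨m - 1 - q, by omega⟩
      fun t ht => if_neg fun h => ht (by ext; simp; omega)]
    exact if_pos (by simp; omega)
  · exact Finset.sum_eq_zero fun t _ => if_neg (by omega)

theorem natDegree_polyOfDescCoeffs_lt {m : ℕ} (hm : 0 < m) (v : Fin m → R) :
    (polyOfDescCoeffs v).natDegree < m := by
  refine (natDegree_le_iff_coeff_eq_zero.2 fun q hq => ?_).trans_lt (Nat.sub_one_lt_of_lt hm)
  rw [coeff_polyOfDescCoeffs, dif_neg (by omega)]

theorem polyOfDescCoeffs_eq_zero_iff {m : ℕ} (v : Fin m → R) :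
    polyOfDescCoeffs v = 0 ↔ v = 0 := by
  refine ⟨fun h => funext fun t => ?_, fun h => by simp [h, polyOfDescCoeffs]⟩
  have := congrArg (coeff · (m - 1 - t)) h
  simp only [coeff_polyOfDescCoeffs, coeff_zero] at this
  rw [dif_pos (by omega)] at this
  simpa [show m - 1 - (m - 1 - (t : ℕ)) = t by omega] using this

theorem exists_polyOfDescCoeffs_eq {m : ℕ} {Q : R[X]} (hQ : Q.natDegree < m) :
    ∃ v : Fin m → R, polyOfDescCoeffs v = Q := by
  refine ⟨fun t => Q.coeff (m - 1 - t), Polynomial.ext fun q => ?_⟩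
  rw [coeff_polyOfDescCoeffs]
  split_ifs with h
  · simp only; congr 1; omega
  · exact (coeff_eq_zero_of_natDegree_lt (by omega)).symm

section Sigma

variable {ι : Type*} {e : ι → ℕ}

noncomputable def polysOfDescCoeffs (v : (j : ι) × Fin (e j) → R) (j : ι) : R[X] :=
  polyOfDescCoeffs fun t => v ⟨j, t⟩

theorem polysOfDescCoeffs_eq_zero_iff (v : (j : ι) × Fin (e j) → R) :
    polysOfDescCoeffs v = 0 ↔ v = 0 := by
  simp only [funext_iff, polysOfDescCoeffs, Pi.zero_apply, polyOfDescCoeffs_eq_zero_iff,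
    Sigma.forall]

theorem natDegree_polysOfDescCoeffs_lt (he : ∀ j, 0 < e j) (v : (j : ι) × Fin (e j) → R)
    (j : ι) :
    (polysOfDescCoeffs v j).natDegree < e j :=
  natDegree_polyOfDescCoeffs_lt (he j) _

theorem exists_polysOfDescCoeffs_eq {H : ι → R[X]} (hH : ∀ j, (H j).natDegree < e j) :
    ∃ v : (j : ι) × Fin (e j) → R, polysOfDescCoeffs v = H := by
  choose w hw using fun j => exists_polyOfDescCoeffs_eq (hH j)
  exact ⟨fun c => w c.1 c.2, funext hw⟩

end Sigma

end DescCoeffs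

section Syzygy

variable {K : Type*} [Field K] [DecidableEq K] {n : ℕ} [NeZero n]

def IsSyzygy (P H : Fin n → K[X]) : Prop :=
  ∀ i, i ≠ 0 → H 0 * P i + H i * P 0 = 0

theorem IsSyzygy.dvd_mul_gcd {P H : Fin n → K[X]} (hH : IsSyzygy P H) :
    P 0 ∣ H 0 * univ.gcd P := by
  have hdvd : ∀ i ∈ univ, P 0 ∣ H 0 * P i := by
    intro i _
    by_cases hi : i = 0
    · exact hi ▸ dvd_mul_left _ _
    · exact ⟨-H i, by linear_combination hH i hi⟩
  have := Finset.dvd_gcd hdvd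
  rw [Finset.gcd_mul_left] at this
  exact this.trans (mul_dvd_mul_right (normalize_associated _).dvd _)

theorem IsSyzygy.eq_zero_of_natDegree_gcd_le {P H : Fin n → K[X]} {k : ℕ}
    (hH : IsSyzygy P H) (hk : k < (P 0).natDegree)
    (hdeg0 : (H 0).natDegree < (P 0).natDegree - k)
    (hgcd : (univ.gcd P).natDegree ≤ k) : H = 0 := by
  have hP0 : P 0 ≠ 0 := ne_zero_of_natDegree_gt hk
  have hG : univ.gcd P ≠ 0 := fun h => hP0 (Finset.gcd_eq_zero_iff.1 h 0 (mem_univ 0))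
  have hH0 : H 0 = 0 := by
    by_contra hne
    have := natDegree_le_of_dvd hH.dvd_mul_gcd (mul_ne_zero hne hG)
    rw [natDegree_mul hne hG] at this
    omega
  funext i
  by_cases hi : i = 0
  · exact hi ▸ hH0
  · simpa [hH0, hP0] using hH i hi

theorem exists_isSyzygy_of_lt_natDegree_gcd {P : Fin n → K[X]} {k : ℕ}
    (hk : ∀ i, k < (P i).natDegree) (hgcd : k < (univ.gcd P).natDegree) :
    ∃ H : Fin n → K[X],
      H ≠ 0 ∧ (∀ j, (H j).natDegree < (P j).natDegree - k) ∧ IsSyzygy P H := by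
  have hP : ∀ i, P i ≠ 0 := fun i => ne_zero_of_natDegree_gt (hk i)
  have hG : univ.gcd P ≠ 0 := fun h => hP 0 (Finset.gcd_eq_zero_iff.1 h 0 (mem_univ 0))
  choose Q hQ using fun i => Finset.gcd_dvd (f := P) (mem_univ i)
  have hQne : ∀ i, Q i ≠ 0 := fun i h => hP i (by rw [hQ i, h, mul_zero])
  have hlt : ∀ i, (Q i).natDegree < (P i).natDegree - k := fun i => by
    have := congrArg natDegree (hQ i)
    rw [natDegree_mul hG (hQne i)] at this
    omega
  refine ⟨fun i => if i = 0 then Q 0 else -Q i, fun h => hQne 0 (by simpa using congrFun h 0),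
    fun j => ?_, fun i hi => ?_⟩
  · dsimp only
    split_ifs with hj
    · exact hj ▸ hlt 0
    · rw [natDegree_neg]; exact hlt j
  · simp only [if_neg hi, if_pos]
    rw [hQ i, hQ 0]
    ring

theorem forall_isSyzygy_eq_zero_iff {P : Fin n → K[X]} {k : ℕ}
    (hk : ∀ i, k < (P i).natDegree) :
    (∀ H : Fin n → K[X],
        (∀ j, (H j).natDegree < (P j).natDegree - k) → IsSyzygy P H → H = 0) ↔
      (univ.gcd P).natDegree ≤ k := by
  refine ⟨fun h => ?_,
    fun hgcd H hdeg hH => hH.eq_zero_of_natDegree_gcd_le (hk 0) (hdeg 0) hgcd⟩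
  by_contra! hlt
  obtain ⟨H, hne, hdeg, hH⟩ := exists_isSyzygy_of_lt_natDegree_gcd hk hlt
  exact hne (h H hdeg hH)

end Syzygy

theorem Matrix.rank_eq_card_width_iff_mulVec_injective {K m n : Type*} [Field K] [Fintype n]
    (A : Matrix m n K) : A.rank = Fintype.card n ↔ Function.Injective A.mulVec := by
  have h := LinearMap.finrank_range_add_finrank_ker A.mulVecLin
  rw [Module.finrank_fintype_fun_eq_card] at h
  rw [Matrix.rank, ← Matrix.coe_mulVecLin, ← LinearMap.ker_eq_bot,
    ← Submodule.finrank_eq_zero]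
  omega

theorem sum_convEntry_mul (P : ℝ[X]) {m e : ℕ} (hP : P.natDegree ≤ m) (v : Fin e → ℝ)
    {s : ℕ} (hs : s < m + e) :
    ∑ t : Fin e, convEntry P m s t * v t = (polyOfDescCoeffs v * P).coeff (m + e - 1 - s) := by
  simp only [polyOfDescCoeffs, Finset.sum_mul, finsetSum_coeff, mul_assoc, coeff_C_mul,
    coeff_X_pow_mul']
  refine Finset.sum_congr rfl fun t _ => ?_
  rw [mul_comm, convEntry]
  have ht := t.isLt
  by_cases hts : (t : ℕ) ≤ s
  · by_cases hsm : s ≤ t + m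
    · rw [if_pos ⟨hts, hsm⟩, if_pos (by omega),
        show m + e - 1 - s - (e - 1 - t) = m + t - s by omega]
    · rw [if_neg (by omega), if_neg (by omega)]
  · rw [if_neg (by omega), if_pos (by omega), coeff_eq_zero_of_natDegree_lt (by omega), mul_zero]

section GenSubres

variable {n : ℕ} [NeZero n] {P : Fin n → ℝ[X]} {d : Fin n → ℕ} {k : ℕ}

theorem genSubres_mulVec_apply (hdeg : ∀ i, (P i).natDegree ≤ d i) (hk : ∀ i, k ≤ d i)
    (v : (j : Fin n) × Fin (d j - k) → ℝ) {i : Fin n} (hi : i ≠ 0)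
    (s : Fin (if i = 0 then 0 else d 0 + d i - k)) :
    ((genSubres P d k).mulVec v) ⟨i, s⟩ =
      (polysOfDescCoeffs v 0 * P i + polysOfDescCoeffs v i * P 0).coeff
        (d 0 + d i - k - 1 - s) := by
  have hs : (s : ℕ) < d 0 + d i - k := by simpa [hi] using s.isLt
  have h0 := hk 0
  have hi' := hk i
  rw [Matrix.mulVec, dotProduct, Fintype.sum_sigma, Fintype.sum_eq_add 0 i (Ne.symm hi),
    coeff_add]
  · simp only [genSubres, if_true, if_neg hi, if_neg (Ne.symm hi)]
    rw [sum_convEntry_mul _ (hdeg i) _ (by omega), sum_convEntry_mul _ (hdeg 0) _ (by omega)]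
    congr 2 <;> omega
  · rintro j ⟨hj0, hji⟩
    simp [genSubres, hj0, hji]

theorem genSubres_mulVec_eq_zero_iff (hdeg : ∀ i, (P i).natDegree ≤ d i)
    (hk : ∀ i, k < d i)
    (v : (j : Fin n) × Fin (d j - k) → ℝ) :
    (genSubres P d k).mulVec v = 0 ↔ IsSyzygy P (polysOfDescCoeffs v) := by
  have hvec {i : Fin n} (hi : i ≠ 0) := genSubres_mulVec_apply hdeg (fun i => (hk i).le) v hi
  constructor
  · intro hv i hi
    ext q
    rw [coeff_zero]
    by_cases hq : q < d 0 + d i - k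
    · have hrow : d 0 + d i - k - 1 - q < if i = 0 then 0 else d 0 + d i - k := by
        rw [if_neg hi]; omega
      have := hvec hi ⟨_, hrow⟩
      rwa [hv, Pi.zero_apply, eq_comm,
        show d 0 + d i - k - 1 - (d 0 + d i - k - 1 - q) = q by omega] at this
    · have hH := natDegree_polysOfDescCoeffs_lt (fun j => Nat.sub_pos_of_lt (hk j)) v
      refine coeff_eq_zero_of_natDegree_lt ((natDegree_add_le _ _).trans_lt (max_lt ?_ ?_)) <;>
        refine natDegree_mul_le.trans_lt ?_
      · have := hH 0; have := hdeg i; omega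
      · have := hH i; have := hdeg 0; omega
  · intro hH
    funext ⟨i, s⟩
    by_cases hi : i = 0
    · subst hi; exact absurd s.isLt (by simp)
    · rw [hvec hi, hH i hi, coeff_zero, Pi.zero_apply]

theorem genSubres_mulVec_injective_iff (hdeg : ∀ i, (P i).natDegree ≤ d i)
    (hk : ∀ i, k < d i) :
    Function.Injective (genSubres P d k).mulVec ↔
      ∀ H : Fin n → ℝ[X], (∀ j, (H j).natDegree < d j - k) → IsSyzygy P H → H = 0 := by
  rw [← Matrix.coe_mulVecLin, injective_iff_map_eq_zero]
  simp only [Matrix.coe_mulVecLin, genSubres_mulVec_eq_zero_iff hdeg hk]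
  constructor
  · intro h H hH hsyz
    obtain ⟨v, rfl⟩ := exists_polysOfDescCoeffs_eq hH
    exact (polysOfDescCoeffs_eq_zero_iff v).2 (h v hsyz)
  · intro h v hsyz
    refine (polysOfDescCoeffs_eq_zero_iff v).1 (h _ ?_ hsyz)
    exact natDegree_polysOfDescCoeffs_lt (fun j => Nat.sub_pos_of_lt (hk j)) v

end GenSubres

theorem stmt2_general {n : ℕ} [NeZero n] (P : Fin n → ℝ[X]) (d : Fin n → ℕ)
    (hdeg : ∀ i, (P i).natDegree = d i)
    (k : ℕ) (hk : ∀ i, k < d i) :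
    (genSubres P d k).rank = Fintype.card ((j : Fin n) × Fin (d j - k)) ↔
      (Finset.univ.gcd P).natDegree ≤ k := by
  rw [Matrix.rank_eq_card_width_iff_mulVec_injective,
    genSubres_mulVec_injective_iff (fun i => (hdeg i).le) hk]
  simp only [← hdeg] at hk ⊢
  exact forall_isSyzygy_eq_zero_iff hk

/-- the generalized subresultant matrix `N_k(P_1,...,P_n)` has full
column rank if and only if `deg (gcd (P_1, ..., P_n)) ≤ k`. -/
theorem stmt2 {n : ℕ} [NeZero n] (hn : 2 ≤ n) (P : Fin n → ℝ[X]) (d : Fin n → ℕ)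
    (hdeg : ∀ i, (P i).natDegree = d i) (hdpos : ∀ i, 0 < d i)
    (k : ℕ) (hk : ∀ i, k < d i) :
    (genSubres P d k).rank = Fintype.card ((j : Fin n) × Fin (d j - k)) ↔
      (Finset.univ.gcd P).natDegree ≤ k :=
  stmt2_general P d hdeg k hk
end

section
/- Suppose polynomials P̃_1,...,P̃_n and nonzero cofactors U_1,...,U_n (deg U_i = d_i - d) satisfy U_1·P̃_i + U_i·P̃_1 = 0 for i = 2,...,n, where deg P̃_i ≤ d_i, and the U_i are pairwise relatively prime. If additionally deg P̃_1 = d_1, then deg(gcd(P̃_1,...,P̃_n)) = d. -/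
/-!
Coprimality of `U₁` and `U₂` together with `U₁ P̃₂ = -U₂ P̃₁` forces `U₁ ∣ P̃₁`, say `P̃₁ = U₁ H`;
cancelling `U₁` in the remaining relations gives `P̃ᵢ = -Uᵢ H`. Hence the gcd of the `P̃ᵢ` is `H`
times the gcd of the cofactors, a unit since `U₁, U₂` are coprime, and `deg H = d₁ - (d₁ - d) = d`.
-/

open Polynomial

theorem IsCoprime.dvd_of_add_mul_eq_zero {R : Type*} [CommRing R] {a b x y : R}
    (h : IsCoprime a b) (hrel : a * x + b * y = 0) : a ∣ y :=
  h.dvd_of_dvd_mul_left ⟨-x, by linear_combination hrel⟩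

theorem exists_eq_mul_of_cross_relations {R ι : Type*} [CommRing R] [IsDomain R]
    [DecidableEq ι] {P U : ι → R} {i₀ j : ι} (hj : j ≠ i₀) (hU : U i₀ ≠ 0)
    (hcop : IsCoprime (U i₀) (U j)) (hrel : ∀ i, i ≠ i₀ → U i₀ * P i + U i * P i₀ = 0) :
    ∃ H, ∀ i, P i = H * if i = i₀ then U i₀ else -U i := by
  obtain ⟨H, hH⟩ := hcop.dvd_of_add_mul_eq_zero (hrel j hj)
  refine ⟨H, fun i => ?_⟩
  by_cases hi : i = i₀
  · subst hi
    simp only [if_pos, hH, mul_comm]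
  · rw [if_neg hi]
    refine mul_left_cancel₀ hU ?_
    linear_combination hrel i hi - U i * hH

theorem Finset.associated_gcd_of_eq_mul {α ι : Type*} [CommRing α] [IsDomain α]
    [NormalizedGCDMonoid α] {s : Finset ι} {f V : ι → α} {i j : ι} (a : α)
    (hf : ∀ k ∈ s, f k = a * V k) (hi : i ∈ s) (hj : j ∈ s) (hcop : IsCoprime (V i) (V j)) :
    Associated (s.gcd f) a := by
  have hunit : IsUnit (s.gcd V) := hcop.isUnit_of_dvd' (s.gcd_dvd hi) (s.gcd_dvd hj)
  rw [Finset.gcd_congr rfl hf]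
  exact (Finset.gcd_mul_left' s V a).trans (associated_mul_unit_left a _ hunit)

theorem stmt15_general {n : ℕ} [NeZero n] (hn : 2 ≤ n) (Pt U : Fin n → ℝ[X]) (d : Fin n → ℕ)
    (dd : ℕ) (hdd : ∀ i, dd < d i)
    (hUne : ∀ i, U i ≠ 0) (hUdeg : ∀ i, (U i).natDegree = d i - dd)
    (hcop : ∀ i j, i ≠ j → IsCoprime (U i) (U j))
    (hrel : ∀ i, i ≠ 0 → U 0 * Pt i + U i * Pt 0 = 0)
    (hP1 : (Pt 0).natDegree = d 0) :
    (Finset.univ.gcd Pt).natDegree = dd := by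
  let one : Fin n := ⟨1, by omega⟩
  have hone : one ≠ 0 := Fin.ne_of_val_ne one_ne_zero
  obtain ⟨H, hH⟩ := exists_eq_mul_of_cross_relations hone (hUne 0) (hcop 0 one hone.symm) hrel
  have hgcd : Associated (Finset.univ.gcd Pt) H :=
    Finset.associated_gcd_of_eq_mul H (fun k _ => hH k) (Finset.mem_univ 0)
      (Finset.mem_univ one) (by simpa [hone] using (hcop 0 one hone.symm).neg_right)
  have hP0 : Pt 0 = H * U 0 := by simpa using hH 0
  have hH0 : H ≠ 0 := by
    rintro rfl
    rw [hP0, zero_mul, natDegree_zero] at hP1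
    have := hdd 0
    omega
  have hHdeg : H.natDegree + (d 0 - dd) = d 0 := by
    rw [← hUdeg 0, ← natDegree_mul hH0 (hUne 0), ← hP0, hP1]
  rw [natDegree_eq_natDegree (degree_eq_degree_of_associated hgcd)]
  have := hdd 0
  omega

/-- if `U_1·P̃_i + U_i·P̃_1 = 0` for `i = 2, ..., n` with pairwise
relatively prime nonzero cofactors `U_i` of degree `d_i - d`, `deg P̃_i ≤ d_i`,
and `deg P̃_1 = d_1`, then `deg (gcd (P̃_1, ..., P̃_n)) = d`. -/
theorem stmt15 {n : ℕ} [NeZero n] (hn : 2 ≤ n) (Pt U : Fin n → ℝ[X]) (d : Fin n → ℕ)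
    (dd : ℕ) (hddpos : 0 < dd) (hdd : ∀ i, dd < d i)
    (hUne : ∀ i, U i ≠ 0) (hUdeg : ∀ i, (U i).natDegree = d i - dd)
    (hcop : ∀ i j, i ≠ j → IsCoprime (U i) (U j))
    (hPdeg : ∀ i, (Pt i).natDegree ≤ d i)
    (hrel : ∀ i, i ≠ 0 → U 0 * Pt i + U i * Pt 0 = 0)
    (hP1 : (Pt 0).natDegree = d 0) :
    (Finset.univ.gcd Pt).natDegree = dd :=
  stmt15_general hn Pt U d dd hdd hUne hUdeg hcop hrel hP1
end
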